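/- Let y : [t,T] → ℝ be continuous, α ∈ ℝ, and let h : [t,T] → ℝ be of bounded variation (so that Stieltjes integrals against dh are defined). If V solves the integral equation V(s) = V(t) + ∫_t^s α·y(u)·V(u) du + ∫_t^s a(u) dh(u) with initial condition V(t) = h(t) and trading strategy a(s) = exp(∫_t^s α·y(η) dη), then V(T) = exp(∫_t^T α·y(η) dη)·h(T). -/

import Mathlib

/-!
`U = a·(h₁ - h₂)` solves the same equation as `V`: integrating by parts against the
Lebesgue–Stieltjes measures, `∫ a dh = a h |ₜˢ - ∫ a' h`, and `a' = α y a`. The difference of two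
solutions satisfies `W s = ∫ₜˢ α y W`, so it vanishes by Grönwall's inequality. Since `V` is not
assumed measurable, the integral in its equation may be the junk value `0`; but where it is not,
`V = U`, and elsewhere `V = V t + (∫ a dh₁ - ∫ a dh₂)`, so `α y V` is integrable after all.
-/

open MeasureTheory Set intervalIntegral

theorem continuousOn_primitive_of_integrableOn_Icc {f : ℝ → ℝ} {a b : ℝ}
    (hf : IntegrableOn f (Icc a b)) : ContinuousOn (fun s => ∫ u in a..s, f u) (Icc a b) := by
  rcases le_or_gt a b with hab | hba
  · rw [← uIcc_of_le hab] at hf ⊢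
    exact continuousOn_primitive_interval hf
  · simp [Icc_eq_empty_of_lt hba]

theorem hasDerivWithinAt_integral_Ici_of_continuousOn {f : ℝ → ℝ} {a b x : ℝ}
    (hf : ContinuousOn f (Icc a b)) (hx : x ∈ Ico a b) :
    HasDerivWithinAt (fun u => ∫ v in a..u, f v) (f x) (Ici x) x := by
  have : Fact (x ∈ Icc a b) := ⟨Ico_subset_Icc_self hx⟩
  exact (integral_hasDerivWithinAt_right (s := Icc a b) (t := Icc a b)
    ((hf.mono (Icc_subset_Icc le_rfl hx.2.le)).intervalIntegrable_of_Icc hx.1)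
    (hf.stronglyMeasurableAtFilter_nhdsWithin measurableSet_Icc x)
    (hf x (Ico_subset_Icc_self hx))).mono_of_mem_nhdsWithin (Icc_mem_nhdsGE_of_mem hx)

theorem eqOn_zero_of_eq_integral_mul {k W : ℝ → ℝ} {a b : ℝ} (hk : ContinuousOn k (Icc a b))
    (hint : IntegrableOn (fun u => k u * W u) (Icc a b))
    (hW : ∀ s ∈ Icc a b, W s = ∫ u in a..s, k u * W u) : EqOn W 0 (Icc a b) := by
  have hΦ := continuousOn_primitive_of_integrableOn_Icc hint
  obtain ⟨K, hK⟩ := isCompact_Icc.exists_bound_of_continuousOn hk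
  have hbound := norm_le_gronwallBound_of_norm_deriv_right_le (δ := 0) (K := K) (ε := 0) hΦ
    (fun x hx => hasDerivWithinAt_integral_Ici_of_continuousOn (hk.mul (hΦ.congr hW)) hx)
    (by simp) fun x hx => by
      rw [norm_mul, ← hW x (Ico_subset_Icc_self hx), add_zero]
      exact mul_le_mul_of_nonneg_right (hK x (Ico_subset_Icc_self hx)) (norm_nonneg _)
  intro s hs
  simpa [gronwallBound_ε0_δ0, ← hW s hs] using hbound s hs

section IntegralEquation

variable {k V U F : ℝ → ℝ} {a b : ℝ}

theorem eqOn_of_integral_equation_of_integrableOn (hk : ContinuousOn k (Icc a b))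
    (hVint : IntegrableOn (fun u => k u * V u) (Icc a b))
    (hUint : IntegrableOn (fun u => k u * U u) (Icc a b))
    (hV : ∀ s ∈ Icc a b, V s = V a + (∫ u in a..s, k u * V u) + F s)
    (hU : ∀ s ∈ Icc a b, U s = U a + (∫ u in a..s, k u * U u) + F s)
    (h0 : V a = U a) : EqOn V U (Icc a b) := by
  have hW := eqOn_zero_of_eq_integral_mul (W := V - U) hk
    (by simpa only [Pi.sub_apply, mul_sub] using
      (hVint.sub hUint : IntegrableOn (fun u => k u * V u - k u * U u) _)) fun s hs => by
      have hsub : uIcc a s ⊆ Icc a b := by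
        rw [uIcc_of_le hs.1]; exact Icc_subset_Icc_right hs.2
      simp only [Pi.sub_apply, mul_sub]
      rw [hV s hs, hU s hs, h0, integral_sub
        (hVint.mono_set hsub).intervalIntegrable (hUint.mono_set hsub).intervalIntegrable]
      ring
  exact fun s hs => sub_eq_zero.1 (hW hs)

theorem integrableOn_mul_of_integral_equation (hk : ContinuousOn k (Icc a b))
    (hUint : IntegrableOn (fun u => k u * U u) (Icc a b))
    (hV : ∀ s ∈ Icc a b, V s = V a + (∫ u in a..s, k u * V u) + F s)
    (hU : ∀ s ∈ Icc a b, U s = U a + (∫ u in a..s, k u * U u) + F s)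
    (h0 : V a = U a) : IntegrableOn (fun u => k u * V u) (Icc a b) := by
  set I := {s | IntegrableOn (fun u => k u * V u) (Icc a s)}
  have hI : MeasurableSet I :=
    OrdConnected.measurableSet ⟨fun _ _ _ hs₂ _ hs => hs₂.mono_set (Icc_subset_Icc_right hs.2)⟩
  have hV_eq_U : EqOn V U (Icc a b ∩ I) := fun s ⟨hs, hsI⟩ =>
    have hsub : Icc a s ⊆ Icc a b := Icc_subset_Icc_right hs.2
    eqOn_of_integral_equation_of_integrableOn (hk.mono hsub) hsI (hUint.mono_set hsub)
      (fun r hr => hV r (hsub hr)) (fun r hr => hU r (hsub hr)) h0 ⟨hs.1, le_rfl⟩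
  -- Off `I` the integral in the equation for `V` is the junk value `0`.
  have hV_off : EqOn V (fun s => V a + F s) (Icc a b \ I) := fun s hs => by
    rw [hV s hs.1, integral_undef
      ((intervalIntegrable_iff_integrableOn_Icc_of_le hs.1.1).not.2 hs.2), add_zero]
  -- Read off `F u = U u - U a - ∫ₐᵘ k U` from the equation for `U`.
  have hF : IntegrableOn (fun u => k u * (V a + F u)) (Icc a b) := by
    have hΦ := continuousOn_primitive_of_integrableOn_Icc hUint
    refine ((hk.mul ((continuousOn_const (c := V a - U a)).sub hΦ)).integrableOn_Icc.add
      hUint).congr_fun (fun u hu => ?_) measurableSet_Icc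
    change k u * (V a - U a - ∫ v in a..u, k v * U v) + k u * U u = k u * (V a + F u)
    rw [hU u hu]
    ring
  rw [← inter_union_sdiff (Icc a b) I]
  exact ((hUint.mono_set inter_subset_left).congr_fun (fun s hs => by rw [hV_eq_U hs])
    (measurableSet_Icc.inter hI)).union
    ((hF.mono_set sdiff_subset).congr_fun (fun s hs => by rw [hV_off hs])
      (measurableSet_Icc.diff hI))

end IntegralEquation

theorem exp_integral_eq_one_add_integral {k : ℝ → ℝ} {t T s : ℝ}
    (hk : ContinuousOn k (Icc t T)) (hs : s ∈ Icc t T) :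
    Real.exp (∫ v in t..s, k v) = 1 + ∫ u in t..s, k u * Real.exp (∫ v in t..u, k v) := by
  have hsub : Icc t s ⊆ Icc t T := Icc_subset_Icc_right hs.2
  have hE := (continuousOn_primitive_of_integrableOn_Icc hk.integrableOn_Icc).rexp
  rw [integral_eq_sub_of_hasDeriv_right_of_le (f' := fun u => k u * Real.exp (∫ v in t..u, k v))
    hs.1 (hE.mono hsub) (fun x hx => ?_) (((hk.mul hE).mono hsub).intervalIntegrable_of_Icc hs.1),
    integral_same, Real.exp_zero]
  · ring
  · exact ((hasDerivWithinAt_integral_Ici_of_continuousOn hk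
      ⟨hx.1.le, hx.2.trans_le hs.2⟩).exp.mono Ioi_subset_Ici_self).congr_deriv (mul_comm _ _)

theorem setIntegral_Ioc_primitive_eq_integral_mul_measureReal {μ : Measure ℝ}
    [IsLocallyFiniteMeasure μ] {φ : ℝ → ℝ} {t s : ℝ} (hφ : IntegrableOn φ (Ioc t s)) (hts : t ≤ s) :
    ∫ u in Ioc t s, (∫ v in t..u, φ v) ∂μ = ∫ v in t..s, φ v * μ.real (Icc v s) := by
  have : IsFiniteMeasure (μ.restrict (Ioc t s)) :=
    isFiniteMeasure_restrict.2 measure_Ioc_lt_top.ne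
  set F : ℝ → ℝ → ℝ := fun u v => {p : ℝ × ℝ | p.2 ≤ p.1}.indicator (fun p => φ p.2) (u, v)
  have hF : Integrable (Function.uncurry F)
      ((μ.restrict (Ioc t s)).prod (volume.restrict (Ioc t s))) :=
    (hφ.comp_snd _).indicator (measurableSet_le measurable_snd measurable_fst)
  have hswap := integral_integral_swap hF
  have hlhs : ∫ u in Ioc t s, (∫ v in Ioc t s, F u v) ∂μ =
      ∫ u in Ioc t s, (∫ v in t..u, φ v) ∂μ := by
    refine setIntegral_congr_fun measurableSet_Ioc fun u hu => ?_
    have : ∀ v, F u v = (Iic u).indicator φ v := fun v => by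
      by_cases hv : v ≤ u <;> simp [F, indicator_apply, hv]
    simp only [this]
    rw [setIntegral_indicator measurableSet_Iic, Ioc_inter_Iic, min_eq_right hu.2,
      integral_of_le hu.1.le]
  have hrhs : ∫ v in Ioc t s, (∫ u in Ioc t s, F u v ∂μ) =
      ∫ v in Ioc t s, φ v * μ.real (Icc v s) := by
    refine setIntegral_congr_fun measurableSet_Ioc fun v hv => ?_
    have : ∀ u, F u v = (Ici v).indicator (fun _ => φ v) u := fun u => by
      by_cases hu : v ≤ u <;> simp [F, indicator_apply, hu]
    simp only [this]
    have hset : Ioc t s ∩ Ici v = Icc v s := by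
      ext x
      simp only [mem_inter_iff, mem_Ioc, mem_Ici, mem_Icc]
      exact ⟨fun ⟨⟨_, hxs⟩, hvx⟩ => ⟨hvx, hxs⟩, fun ⟨hvx, hxs⟩ => ⟨⟨hv.1.trans_le hvx, hxs⟩, hvx⟩⟩
    rw [setIntegral_indicator measurableSet_Ici, setIntegral_const, hset, smul_eq_mul, mul_comm]
  rw [← hlhs, hswap, hrhs, integral_of_le hts]

theorem StieltjesFunction.integrableOn_mul (h : StieltjesFunction ℝ) {f : ℝ → ℝ} {a b : ℝ}
    (hf : ContinuousOn f (Icc a b)) : IntegrableOn (fun u => f u * h u) (Icc a b) :=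
  IntegrableOn.continuousOn_mul hf ((h.mono.monotoneOn _).integrableOn_isCompact isCompact_Icc)
    isCompact_Icc

theorem StieltjesFunction.setIntegral_Ioc_by_parts (h : StieltjesFunction ℝ) {g g' : ℝ → ℝ}
    {t s : ℝ} (hts : t ≤ s) (hg' : ContinuousOn g' (Icc t s))
    (hg : ∀ u ∈ Icc t s, g u = g t + ∫ v in t..u, g' v) :
    ∫ u in Ioc t s, g u ∂h.measure = g s * h s - g t * h t - ∫ u in t..s, g' u * h u := by
  have : IsFiniteMeasure (h.measure.restrict (Ioc t s)) :=
    isFiniteMeasure_restrict.2 measure_Ioc_lt_top.ne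
  have hΦ := continuousOn_primitive_of_integrableOn_Icc hg'.integrableOn_Icc
  have hμ : h.measure.real (Ioc t s) = h s - h t := by
    rw [measureReal_def, h.measure_Ioc, ENNReal.toReal_ofReal (sub_nonneg.2 (h.mono hts))]
  -- `h` has at most countably many jumps, so `μ [v, s] = h s - h v` for almost every `v`.
  have hμ_Icc : ∀ᵐ v, v ∈ uIoc t s → g' v * h.measure.real (Icc v s) = g' v * (h s - h v) := by
    filter_upwards [h.countable_leftLim_ne.ae_notMem volume] with v hv hvts
    have hvs : v ≤ s := (uIoc_of_le hts ▸ hvts).2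
    rw [measureReal_def, h.measure_Icc, not_not.1 hv,
      ENNReal.toReal_ofReal (sub_nonneg.2 (h.mono hvs))]
  calc ∫ u in Ioc t s, g u ∂h.measure
      = ∫ u in Ioc t s, (g t + ∫ v in t..u, g' v) ∂h.measure :=
        setIntegral_congr_fun measurableSet_Ioc fun u hu => hg u (Ioc_subset_Icc_self hu)
    _ = g t * (h s - h t) + ∫ v in t..s, g' v * h.measure.real (Icc v s) := by
        rw [integral_add (integrable_const _) (hΦ.integrableOn_Icc.mono_set Ioc_subset_Icc_self),
          setIntegral_const, hμ, smul_eq_mul, mul_comm,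
          setIntegral_Ioc_primitive_eq_integral_mul_measureReal
            (hg'.integrableOn_Icc.mono_set Ioc_subset_Icc_self) hts]
    _ = g t * (h s - h t) + ∫ v in t..s, g' v * (h s - h v) := by rw [integral_congr_ae hμ_Icc]
    _ = g s * h s - g t * h t - ∫ u in t..s, g' u * h u := by
        simp only [mul_sub]
        rw [intervalIntegral.integral_sub (f := fun v => g' v * h s)
          ((hg'.mul continuousOn_const).intervalIntegrable_of_Icc hts)
          ((intervalIntegrable_iff_integrableOn_Icc_of_le hts).2 (h.integrableOn_mul hg')),
          intervalIntegral.integral_mul_const, hg s ⟨hts, le_rfl⟩]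
        ring

theorem mul_sub_stieltjes_eq_add_integral {k g : ℝ → ℝ} {t T s : ℝ}
    (hk : ContinuousOn k (Icc t T)) (hg : ContinuousOn g (Icc t T))
    (hg_eq : ∀ u ∈ Icc t T, g u = g t + ∫ v in t..u, k v * g v) (h₁ h₂ : StieltjesFunction ℝ)
    (hs : s ∈ Icc t T) :
    g s * (h₁ s - h₂ s) = g t * (h₁ t - h₂ t) + (∫ u in t..s, k u * (g u * (h₁ u - h₂ u))) +
      ((∫ u in Ioc t s, g u ∂h₁.measure) - ∫ u in Ioc t s, g u ∂h₂.measure) := by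
  have hsub : Icc t s ⊆ Icc t T := Icc_subset_Icc_right hs.2
  have hkg : ContinuousOn (fun u => k u * g u) (Icc t s) := (hk.mul hg).mono hsub
  have hint (h : StieltjesFunction ℝ) : IntervalIntegrable (fun u => k u * g u * h u) volume t s :=
    (intervalIntegrable_iff_integrableOn_Icc_of_le hs.1).2 (h.integrableOn_mul hkg)
  have hsplit : ∫ u in t..s, k u * (g u * (h₁ u - h₂ u)) =
      (∫ u in t..s, k u * g u * h₁ u) - ∫ u in t..s, k u * g u * h₂ u := by
    rw [← intervalIntegral.integral_sub (hint h₁) (hint h₂)]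
    congr 1
    ext u
    ring
  rw [h₁.setIntegral_Ioc_by_parts hs.1 hkg (fun u hu => hg_eq u (hsub hu)),
    h₂.setIntegral_Ioc_by_parts hs.1 hkg (fun u hu => hg_eq u (hsub hu)), hsplit]
  ring

/-- Deterministic core of the collateral replication argument.
Let `y` be continuous on `[t,T]`, `α ∈ ℝ`, and let the bounded-variation price
process `h` be given as a difference `h = h₁ − h₂` of (right-continuous monotone)
Stieltjes functions, so that the Stieltjes integral `∫ a dh` is defined as the
difference of the Lebesgue–Stieltjes integrals against `h₁.measure` and
`h₂.measure`.  If `V` solves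
`V(s) = V(t) + ∫_t^s α·y(u)·V(u) du + ∫_t^s a(u) dh(u)` with `V(t) = h(t)` and
trading strategy `a(s) = exp(∫_t^s α·y(η) dη)`, then
`V(T) = exp(∫_t^T α·y(η) dη)·h(T)`. -/
theorem collateral_account_solution
    (t T : ℝ) (htT : t ≤ T) (α : ℝ) (y V : ℝ → ℝ)
    (hy : ContinuousOn y (Set.Icc t T))
    (h₁ h₂ : StieltjesFunction ℝ)
    (a : ℝ → ℝ) (ha : ∀ s, a s = Real.exp (∫ η in t..s, α * y η))
    (hV : ∀ s ∈ Set.Icc t T,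
      V s = V t + (∫ u in t..s, α * y u * V u) +
        ((∫ u in Set.Ioc t s, a u ∂h₁.measure) - (∫ u in Set.Ioc t s, a u ∂h₂.measure)))
    (hinit : V t = h₁ t - h₂ t) :
    V T = Real.exp (∫ η in t..T, α * y η) * (h₁ T - h₂ T) := by
  have hk : ContinuousOn (fun u => α * y u) (Icc t T) := continuousOn_const.mul hy
  have ha_cont : ContinuousOn a (Icc t T) := by
    rw [funext ha]
    exact (continuousOn_primitive_of_integrableOn_Icc hk.integrableOn_Icc).rexp
  have ha_eq : ∀ u ∈ Icc t T, a u = a t + ∫ v in t..u, α * y v * a v := fun u hu => by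
    simp only [ha, integral_same, Real.exp_zero]
    exact exp_integral_eq_one_add_integral hk hu
  set U : ℝ → ℝ := fun s => a s * (h₁ s - h₂ s)
  have hU : ∀ s ∈ Icc t T, U s = U t + (∫ u in t..s, α * y u * U u) +
      ((∫ u in Ioc t s, a u ∂h₁.measure) - ∫ u in Ioc t s, a u ∂h₂.measure) :=
    fun s hs => mul_sub_stieltjes_eq_add_integral hk ha_cont ha_eq h₁ h₂ hs
  have hUint : IntegrableOn (fun u => α * y u * U u) (Icc t T) :=
    ((h₁.integrableOn_mul (hk.mul ha_cont)).sub (h₂.integrableOn_mul (hk.mul ha_cont))).congr_fun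
      (fun u _ => by simp only [Pi.sub_apply, Pi.mul_apply, U]; ring) measurableSet_Icc
  have hVU₀ : V t = U t := by simp [U, hinit, ha]
  rw [← ha T]
  exact eqOn_of_integral_equation_of_integrableOn hk
    (integrableOn_mul_of_integral_equation hk hUint hV hU hVU₀) hUint hV hU hVU₀ ⟨htT, le_rfl⟩
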